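/- arXiv:1407.0135 — 2 statements merged into one kernel-verified Lean document; each statement's English description precedes it below -/
import Mathlib

section
/- Assume t ≥ 1 and u ≥ 0, and write b = b(t), N = N(t,u). Let x be an integer such that (x, |ax|_N, |bx|_N) is a Voronoi relative minimum of |Γ(a,b,N)|. Suppose that either there is an even integer k with 0 ≤ k ≤ a−1 such that kN/(2a) + au + γ ≤ x < (k+1)N/(2a), or there is an odd integer k with 0 ≤ k ≤ a−1 such that kN/(2a) ≤ x < (k+1)N/(2a) − (au+γ). Then |bx|_N ≤ α. -/
/-- The box `Π(A)` spanned by a (finite nonempty) set `A ⊆ ℝⁿ_{≥0}`: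
all points with nonnegative coordinates bounded by the coordinatewise maxima of `A`. -/
def box {n : ℕ} (A : Set (Fin n → ℝ)) : Set (Fin n → ℝ) :=
  {x | ∀ i, 0 ≤ x i ∧ x i ≤ sSup ((fun p => p i) '' A)}

/-- The set of Voronoi relative minima of `S`: points `g ∈ S` such that the box
`Π({g})` contains no point of `S \ {g}`. -/
def vrm {n : ℕ} (S : Set (Fin n → ℝ)) : Set (Fin n → ℝ) :=
  {g | g ∈ S ∧ ∀ p ∈ S, p ≠ g → p ∉ box {g}}

/-- A nonempty finite subset `F ⊆ vrm S` is minimal if the box `Π(F)` contains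
no point of `vrm S \ F`. -/
def IsMinimal {n : ℕ} (S F : Set (Fin n → ℝ)) : Prop :=
  F.Nonempty ∧ F.Finite ∧ F ⊆ vrm S ∧ ∀ p ∈ vrm S, p ∉ F → p ∉ box F

/-- `p` is a point on the `j`-th coordinate axis, different from the origin. -/
def OnAxis (j : Fin 3) (p : Fin 3 → ℝ) : Prop :=
  p ≠ 0 ∧ ∀ k, k ≠ j → p k = 0

/-- `S ⊆ ℝ³` is axial if it contains a point on each of the three coordinate axes. -/
def Axial (S : Set (Fin 3 → ℝ)) : Prop :=
  ∀ j : Fin 3, ∃ p ∈ S, ∀ k, k ≠ j → p k = 0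

/-- A finite axial set `S ⊆ ℝ³_{≥0}` is in general position if (i) each coordinate
plane contains exactly two points of `S`, neither at the origin, lying on the two
coordinate axes contained in that plane, and (ii) every other plane parallel to a
coordinate plane contains at most one point of `S`. -/
def GeneralPosition (S : Set (Fin 3 → ℝ)) : Prop :=
  (∀ i : Fin 3, ∃ p q : Fin 3 → ℝ, p ≠ q ∧ {r | r ∈ S ∧ r i = 0} = {p, q} ∧
    ∃ j k : Fin 3, j ≠ i ∧ k ≠ i ∧ j ≠ k ∧ OnAxis j p ∧ OnAxis k q) ∧
  (∀ i : Fin 3, ∀ c : ℝ, c ≠ 0 → {r | r ∈ S ∧ r i = c}.Subsingleton)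

/-- The rank-1 lattice `Γ(a,b,N) = {m₁·(1,a,b) + m₂·(0,N,0) + m₃·(0,0,N)} ⊆ ℝ³`. -/
def Gamma (a b N : ℤ) : Set (Fin 3 → ℝ) :=
  {p | ∃ m₁ m₂ m₃ : ℤ,
    p = ![(m₁ : ℝ), (m₁ : ℝ) * a + (m₂ : ℝ) * N, (m₁ : ℝ) * b + (m₃ : ℝ) * N]}

/-- `|Γ| = {(|x₁|,…,|xₙ|) : x ∈ Γ} \ {0}`. -/
def absSet {n : ℕ} (L : Set (Fin n → ℝ)) : Set (Fin n → ℝ) :=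
  {q | (∃ p ∈ L, ∀ i, q i = |p i|) ∧ q ≠ 0}

/-- `|x|_N = min(x mod N, (−x) mod N)`, the distance from `x` to the nearest
multiple of `N`. -/
def distN (N x : ℤ) : ℤ := min (x % N) ((-x) % N)

/-!
Put `M = au + γ`, so that `N = bM + α`. The lattice point with first coordinate `M` gives
`(M, |aM|_N, |bM|_N) ∈ |Γ(a,b,N)|`, and `bM ≡ -α (mod N)` forces `|bM|_N ≤ α`. On the
intervals of the hypothesis, `ax` stays at distance at least `aM` from every multiple of `N`,
so `M ≤ x` and `|aM|_N ≤ aM ≤ |ax|_N`. Were `|bx|_N > α`, that point would be a second point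
of `|Γ(a,b,N)|` in the box of the relative minimum `(x, |ax|_N, |bx|_N)`.
-/

lemma mem_box_singleton_iff {n : ℕ} {p g : Fin n → ℝ} : p ∈ box {g} ↔ 0 ≤ p ∧ p ≤ g := by
  simp only [box, Set.image_singleton, csSup_singleton, Set.mem_ofPred_eq]
  exact ⟨fun h => ⟨fun i => (h i).1, fun i => (h i).2⟩, fun h i => ⟨h.1 i, h.2 i⟩⟩

lemma eq_of_mem_vrm_of_le {n : ℕ} {S : Set (Fin n → ℝ)} {g p : Fin n → ℝ} (hg : g ∈ vrm S)
    (hp : p ∈ S) (hp0 : 0 ≤ p) (hpg : p ≤ g) : p = g := by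
  by_contra hne
  exact hg.2 p hp hne (mem_box_singleton_iff.2 ⟨hp0, hpg⟩)

lemma nonneg_of_mem_absSet {n : ℕ} {L : Set (Fin n → ℝ)} {q : Fin n → ℝ} (hq : q ∈ absSet L) :
    0 ≤ q := by
  obtain ⟨⟨p, -, hpq⟩, -⟩ := hq
  intro i
  rw [Pi.zero_apply, hpq i]
  exact abs_nonneg _

section distN

variable {N : ℤ}

lemma distN_neg (y : ℤ) : distN N (-y) = distN N y := by
  rw [distN, distN, neg_neg, min_comm]

lemma distN_add_mul_self (y c : ℤ) : distN N (y + N * c) = distN N y := by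
  rw [distN, distN, Int.add_mul_emod_self_left, show -(y + N * c) = -y + N * -c by ring,
    Int.add_mul_emod_self_left]

lemma distN_lt (hN : 0 < N) (y : ℤ) : distN N y < N :=
  (min_le_left _ _).trans_lt (Int.emod_lt_of_pos _ hN)

lemma emod_le_of_nonneg (hN : 0 < N) {y : ℤ} (hy : 0 ≤ y) : y % N ≤ y := by
  have : 0 ≤ N * (y / N) := mul_nonneg hN.le (Int.ediv_nonneg hy hN.le)
  rw [Int.emod_def]
  linarith

lemma distN_le_abs (hN : 0 < N) (y : ℤ) : distN N y ≤ |y| := by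
  rcases le_total 0 y with hy | hy
  · rw [abs_of_nonneg hy]
    exact (min_le_left _ _).trans (emod_le_of_nonneg hN hy)
  · rw [abs_of_nonpos hy]
    exact (min_le_right _ _).trans (emod_le_of_nonneg hN (neg_nonneg.2 hy))

lemma exists_distN_eq_abs (hN : 0 < N) (y : ℤ) : ∃ c : ℤ, distN N y = |y + c * N| := by
  rcases min_choice (y % N) ((-y) % N) with h | h
  · refine ⟨-(y / N), ?_⟩
    rw [distN, h, show y + -(y / N) * N = y % N by rw [Int.emod_def]; ring,
      abs_of_nonneg (Int.emod_nonneg y hN.ne')]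
  · refine ⟨(-y) / N, ?_⟩
    rw [distN, h, show y + (-y) / N * N = -((-y) % N) by rw [Int.emod_def]; ring, abs_neg,
      abs_of_nonneg (Int.emod_nonneg (-y) hN.ne')]

lemma le_distN_of_le_of_le {y j r : ℤ} (hr : 0 < r) (hlo : j * N + r ≤ y)
    (hhi : y + r ≤ (j + 1) * N) : r ≤ distN N y := by
  have hmod : y % N = y - j * N := by
    rw [show y = (y - j * N) + N * j by ring, Int.add_mul_emod_self_left,
      Int.emod_eq_of_lt (by linarith) (by linarith)]
    ring
  have hneg : (-y) % N = (j + 1) * N - y := by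
    rw [show -y = ((j + 1) * N - y) + N * -(j + 1) by ring, Int.add_mul_emod_self_left,
      Int.emod_eq_of_lt (by linarith) (by linarith)]
  rw [distN, hmod, hneg]
  exact le_min (by linarith) (by linarith)

end distN

lemma mem_absSet_Gamma {a b N m : ℤ} (hN : 0 < N) (hm : 0 < m) :
    ![(m : ℝ), (distN N (a * m) : ℝ), (distN N (b * m) : ℝ)] ∈ absSet (Gamma a b N) := by
  obtain ⟨c₂, hc₂⟩ := exists_distN_eq_abs hN (a * m)
  obtain ⟨c₃, hc₃⟩ := exists_distN_eq_abs hN (b * m)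
  refine ⟨⟨_, ⟨m, c₂, c₃, rfl⟩, fun i => ?_⟩, fun h => ?_⟩
  · fin_cases i
    · simp [abs_of_pos (Int.cast_pos.2 hm)]
    · simp [hc₂, mul_comm]
    · simp [hc₃, mul_comm]
  · have := congrFun h 0
    simp only [Matrix.cons_val_zero, Pi.zero_apply, Int.cast_eq_zero] at this
    exact hm.ne' this

section interval

variable {a N M x k : ℤ}

lemma exists_margin_of_even (ha : 0 < a) (hk : Even k) (hk0 : 0 ≤ k)
    (hlo : (k : ℝ) * N / (2 * a) + M ≤ x) (hhi : (x : ℝ) < ((k : ℝ) + 1) * N / (2 * a)) :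
    ∃ j : ℤ, 0 ≤ j ∧ j * N + a * M ≤ a * x ∧ a * x + a * M ≤ (j + 1) * N := by
  have h2a : (0 : ℝ) < 2 * a := by positivity
  rw [div_add' _ _ _ h2a.ne', div_le_iff₀ h2a] at hlo
  rw [lt_div_iff₀ h2a] at hhi
  have hlo' : k * N + M * (2 * a) ≤ x * (2 * a) := by exact_mod_cast hlo
  have hhi' : x * (2 * a) < (k + 1) * N := by exact_mod_cast hhi
  obtain ⟨j, rfl⟩ := hk
  exact ⟨j, by omega, by linarith, by linarith⟩

lemma exists_margin_of_odd (ha : 0 < a) (hk : Odd k) (hk0 : 0 ≤ k)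
    (hlo : (k : ℝ) * N / (2 * a) ≤ x) (hhi : (x : ℝ) < ((k : ℝ) + 1) * N / (2 * a) - M) :
    ∃ j : ℤ, 0 ≤ j ∧ j * N + a * M ≤ a * x ∧ a * x + a * M ≤ (j + 1) * N := by
  have h2a : (0 : ℝ) < 2 * a := by positivity
  rw [div_le_iff₀ h2a] at hlo
  rw [lt_sub_iff_add_lt, lt_div_iff₀ h2a] at hhi
  have hlo' : k * N ≤ x * (2 * a) := by exact_mod_cast hlo
  have hhi' : (x + M) * (2 * a) < (k + 1) * N := by exact_mod_cast hhi
  obtain ⟨j, rfl⟩ := hk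
  exact ⟨j, by omega, by linarith, by linarith⟩

end interval

theorem relative_minimum_third_type_general
    (a α γ : ℤ) (ha : 1 ≤ a) (hα : 1 ≤ α)
    (hγ : 0 ≤ γ ∧ γ < a)
    (u : ℤ) (hu : 0 ≤ u)
    (b N : ℤ) (hN : N = b * (a * u + γ) + α)
    (x : ℤ)
    (hmin : ![(x : ℝ), (distN N (a * x) : ℝ), (distN N (b * x) : ℝ)]
      ∈ vrm (absSet (Gamma a b N)))
    (hx : (∃ k : ℤ, Even k ∧ 0 ≤ k ∧ k ≤ a - 1 ∧
        ((k : ℝ) * N) / (2 * a) + ((a * u + γ : ℤ) : ℝ) ≤ (x : ℝ) ∧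
        (x : ℝ) < (((k : ℝ) + 1) * N) / (2 * a)) ∨
      (∃ k : ℤ, Odd k ∧ 0 ≤ k ∧ k ≤ a - 1 ∧
        ((k : ℝ) * N) / (2 * a) ≤ (x : ℝ) ∧
        (x : ℝ) < (((k : ℝ) + 1) * N) / (2 * a) - ((a * u + γ : ℤ) : ℝ))) :
    distN N (b * x) ≤ α := by
  by_contra! hcon
  set M := a * u + γ
  have ha0 : 0 < a := by omega
  obtain ⟨j, hj, hlo, hhi⟩ :
      ∃ j : ℤ, 0 ≤ j ∧ j * N + a * M ≤ a * x ∧ a * x + a * M ≤ (j + 1) * N := by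
    rcases hx with ⟨k, hk, hk0, -, h1, h2⟩ | ⟨k, hk, hk0, -, h1, h2⟩
    exacts [exists_margin_of_even ha0 hk hk0 h1 h2, exists_margin_of_odd ha0 hk hk0 h1 h2]
  have hM0 : 0 < M := by
    refine lt_of_le_of_ne (by nlinarith) fun h => ?_
    rw [← h, mul_zero, zero_add] at hN
    exact (distN_lt (by omega) (b * x)).not_ge (hN ▸ hcon.le)
  have haM : 0 < a * M := mul_pos ha0 hM0
  have hN0 : 0 < N := by linarith
  have hxM : M ≤ x := le_of_mul_le_mul_left (by nlinarith) ha0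
  have hp := mem_absSet_Gamma (a := a) (b := b) hN0 hM0
  have hbM : distN N (b * M) ≤ α := by
    rw [show b * M = -α + N * 1 by linarith, distN_add_mul_self, distN_neg]
    exact (distN_le_abs hN0 α).trans_eq (abs_of_pos (by omega))
  have haM' : distN N (a * M) ≤ distN N (a * x) :=
    ((distN_le_abs hN0 _).trans_eq (abs_of_pos haM)).trans (le_distN_of_le_of_le haM hlo hhi)
  have heq := eq_of_mem_vrm_of_le hmin hp (nonneg_of_mem_absSet hp) fun i => by
    fin_cases i <;> simp <;> omega
  have hbx : distN N (b * M) = distN N (b * x) := by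
    simpa only [Matrix.cons_val_two, Matrix.tail_cons, Matrix.head_cons, Int.cast_inj]
      using congrFun heq 2
  omega

/-- Classification of relative minima of the third type: if `x` lies in one of
the intervals `I_{k,3}`, then `|bx|_N ≤ α`. Here `b = b(t) = αat + β`,
`N = N(t,u) = b(au + γ) + α`, `t ≥ 1`, `u ≥ 0`. -/
theorem relative_minimum_third_type
    (a α β γ : ℤ) (ha : 1 ≤ a) (hα : 1 ≤ α)
    (hβ : 0 ≤ β ∧ β < α * a) (hγ : 0 ≤ γ ∧ γ < a)
    (hcop1 : Int.gcd α β = 1) (hcop2 : Int.gcd a (α + β * γ) = 1)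
    (t u : ℤ) (ht : 1 ≤ t) (hu : 0 ≤ u)
    (b N : ℤ) (hb : b = α * a * t + β) (hN : N = b * (a * u + γ) + α)
    (x : ℤ)
    (hmin : ![(x : ℝ), (distN N (a * x) : ℝ), (distN N (b * x) : ℝ)]
      ∈ vrm (absSet (Gamma a b N)))
    (hx : (∃ k : ℤ, Even k ∧ 0 ≤ k ∧ k ≤ a - 1 ∧
        ((k : ℝ) * N) / (2 * a) + ((a * u + γ : ℤ) : ℝ) ≤ (x : ℝ) ∧
        (x : ℝ) < (((k : ℝ) + 1) * N) / (2 * a)) ∨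
      (∃ k : ℤ, Odd k ∧ 0 ≤ k ∧ k ≤ a - 1 ∧
        ((k : ℝ) * N) / (2 * a) ≤ (x : ℝ) ∧
        (x : ℝ) < (((k : ℝ) + 1) * N) / (2 * a) - ((a * u + γ : ℤ) : ℝ))) :
    distN N (b * x) ≤ α :=
  relative_minimum_third_type_general a α γ ha hα hγ u hu b N hN x hmin hx
end

section
/- Let b and N be coprime positive integers with 1 ≤ b < N, and let Γ₂(b,N) = {m₁·(1,b) + m₂·(0,N) : m₁,m₂ ∈ ℤ} ⊆ ℝ² be the two-dimensional lattice generated by (1,b) and (0,N), with |Γ₂(b,N)| = {(|x|,|y|) : (x,y) ∈ Γ₂(b,N)} \ {(0,0)}. Then for every integer k with 1 ≤ k ≤ N/2, the point (k, k, |kb|_N) is a Voronoi relative minimum of |Γ(1,b,N)| if and only if the point (k, |kb|_N) is a Voronoi relative minimum of |Γ₂(b,N)|. -/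
/-- The two-dimensional lattice `Γ₂(b,N) = {m₁·(1,b) + m₂·(0,N)} ⊆ ℝ²`. -/
def Gamma2 (b N : ℤ) : Set (Fin 2 → ℝ) :=
  {p | ∃ m₁ m₂ : ℤ, p = ![(m₁ : ℝ), (m₁ : ℝ) * b + (m₂ : ℝ) * N]}

/-! A point `g ≥ 0` is a Voronoi relative minimum of `S` exactly when `S ∩ Π({g}) = {g}`, so it
suffices that `(x, y) ↦ (x, x, y)` maps `|Γ₂(b,N)| ∩ Π({(k, d)})` onto `|Γ(1,b,N)| ∩ Π({(k, k, d)})`,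
where `d = |kb|_N`.
A point `(|m₁|, |m₁ + m₂N|, ·)` of the latter has `|m₁|, |m₁ + m₂N| ≤ k ≤ N/2`, so `|m₂N| ≤ N`,
and either `m₂ = 0` or both absolute values equal `N/2`; in both cases its first two coordinates
agree. -/

lemma mem_box_singleton {n : ℕ} (g x : Fin n → ℝ) :
    x ∈ box {g} ↔ ∀ i, 0 ≤ x i ∧ x i ≤ g i := by
  simp [box]

lemma mem_vrm_iff_inter_box_eq {n : ℕ} {S : Set (Fin n → ℝ)} {g : Fin n → ℝ} (hg : 0 ≤ g) :
    g ∈ vrm S ↔ S ∩ box {g} = {g} := by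
  have hgg : g ∈ box {g} := (mem_box_singleton g g).2 fun i => ⟨hg i, le_rfl⟩
  constructor
  · rintro ⟨hgS, hmin⟩
    refine Set.eq_singleton_iff_unique_mem.2 ⟨⟨hgS, hgg⟩, fun p ⟨hpS, hpg⟩ => ?_⟩
    by_contra hne
    exact hmin p hpS hne hpg
  · intro h
    have hg' : g ∈ S ∩ box {g} := by rw [h]; exact Set.mem_singleton g
    exact ⟨hg'.1, fun p hpS hne hpg => hne (h ▸ ⟨hpS, hpg⟩ : p ∈ ({g} : Set _))⟩

lemma mem_vrm_iff_of_inter_box_eq_image {m n : ℕ} {S : Set (Fin m → ℝ)} {T : Set (Fin n → ℝ)}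
    {f : (Fin m → ℝ) → Fin n → ℝ} (hf : Function.Injective f) {g : Fin m → ℝ}
    (hg : 0 ≤ g) (hfg : 0 ≤ f g) (h : T ∩ box {f g} = f '' (S ∩ box {g})) :
    f g ∈ vrm T ↔ g ∈ vrm S := by
  rw [mem_vrm_iff_inter_box_eq hg, mem_vrm_iff_inter_box_eq hfg, h, ← Set.image_singleton,
    (Set.image_injective.2 hf).eq_iff]

lemma abs_add_int_mul_eq_abs {x k N : ℝ} (m : ℤ) (hN : 2 * k ≤ N) (hx : |x| ≤ k)
    (hxm : |x + m * N| ≤ k) : |x + m * N| = |x| := by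
  rcases eq_or_ne m 0 with rfl | hm
  · simp
  have hm1 : (1 : ℝ) ≤ |(m : ℝ)| := by exact_mod_cast Int.one_le_abs hm
  have hN0 : 0 ≤ N := by linarith [abs_nonneg x]
  have hN_le : N ≤ |m * N| := by
    rw [abs_mul, abs_of_nonneg hN0]
    exact le_mul_of_one_le_left hN0 hm1
  have htri : |m * N| ≤ |x + m * N| + |x| := by
    simpa using abs_sub (x + m * N) x
  linarith

def dupFirst (x : Fin 2 → ℝ) : Fin 3 → ℝ := ![x 0, x 0, x 1]

lemma dupFirst_injective : Function.Injective dupFirst := by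
  intro x y h
  ext i
  fin_cases i
  · exact congrFun h 0
  · exact congrFun h 2

lemma dupFirst_zero : dupFirst 0 = 0 := by
  ext i
  fin_cases i <;> rfl

lemma dupFirst_nonneg {x : Fin 2 → ℝ} (hx : 0 ≤ x) : 0 ≤ dupFirst x := by
  intro i
  fin_cases i
  exacts [hx 0, hx 0, hx 1]

lemma dupFirst_mem_box_singleton_iff (x g : Fin 2 → ℝ) :
    dupFirst x ∈ box {dupFirst g} ↔ x ∈ box {g} := by
  simp [mem_box_singleton, Fin.forall_fin_succ, dupFirst]

lemma dupFirst_mem_absSet_gamma {b N : ℤ} {x : Fin 2 → ℝ} (hx : x ∈ absSet (Gamma2 b N)) :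
    dupFirst x ∈ absSet (Gamma 1 b N) := by
  obtain ⟨⟨q, ⟨m₁, m₂, rfl⟩, hxq⟩, hx0⟩ := hx
  refine ⟨⟨_, ⟨m₁, 0, m₂, rfl⟩, ?_⟩, ?_⟩
  · simp [Fin.forall_fin_succ, dupFirst, hxq]
  · rw [← dupFirst_zero]
    exact dupFirst_injective.ne hx0

lemma exists_dupFirst_eq_of_mem_absSet_gamma {b N : ℤ} {k : ℝ} (hk : 2 * k ≤ N)
    {p : Fin 3 → ℝ} (hp : p ∈ absSet (Gamma 1 b N)) (hp0 : p 0 ≤ k) (hp1 : p 1 ≤ k) :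
    ∃ x ∈ absSet (Gamma2 b N), dupFirst x = p := by
  obtain ⟨⟨q, ⟨m₁, m₂, m₃, rfl⟩, hpq⟩, hp_ne⟩ := hp
  have h0 : p 0 = |(m₁ : ℝ)| := by simpa using hpq 0
  have h1 : p 1 = |m₁ + m₂ * (N : ℝ)| := by simpa using hpq 1
  have h2 : p 2 = |m₁ * (b : ℝ) + m₃ * N| := by simpa using hpq 2
  have h10 : p 1 = p 0 := by
    rw [h1, h0]
    exact abs_add_int_mul_eq_abs m₂ hk (h0 ▸ hp0) (h1 ▸ hp1)
  have hdup : dupFirst ![p 0, p 2] = p := by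
    ext i
    fin_cases i
    exacts [rfl, h10.symm, rfl]
  refine ⟨_, ⟨⟨_, ⟨m₁, m₃, rfl⟩, ?_⟩, ?_⟩, hdup⟩
  · simp [Fin.forall_fin_succ, h0, h2]
  · intro h
    rw [h, dupFirst_zero] at hdup
    exact hp_ne hdup.symm

lemma absSet_gamma_inter_box_dupFirst {b N : ℤ} {g : Fin 2 → ℝ} (hg : 2 * g 0 ≤ N) :
    absSet (Gamma 1 b N) ∩ box {dupFirst g} =
      dupFirst '' (absSet (Gamma2 b N) ∩ box {g}) := by
  ext p
  constructor
  · rintro ⟨hp, hpg⟩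
    have hbox := (mem_box_singleton _ _).1 hpg
    obtain ⟨x, hx, rfl⟩ := exists_dupFirst_eq_of_mem_absSet_gamma hg hp (hbox 0).2 (hbox 1).2
    exact ⟨x, ⟨hx, (dupFirst_mem_box_singleton_iff x g).1 hpg⟩, rfl⟩
  · rintro ⟨x, ⟨hx, hxg⟩, rfl⟩
    exact ⟨dupFirst_mem_absSet_gamma hx, (dupFirst_mem_box_singleton_iff x g).2 hxg⟩

lemma dupFirst_mem_vrm_absSet_gamma_iff {b N : ℤ} {g : Fin 2 → ℝ} (hg : 0 ≤ g)
    (hgN : 2 * g 0 ≤ N) :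
    dupFirst g ∈ vrm (absSet (Gamma 1 b N)) ↔ g ∈ vrm (absSet (Gamma2 b N)) :=
  mem_vrm_iff_of_inter_box_eq_image dupFirst_injective hg (dupFirst_nonneg hg)
    (absSet_gamma_inter_box_dupFirst hgN)

lemma distN_nonneg {N : ℤ} (hN : N ≠ 0) (x : ℤ) : 0 ≤ distN N x :=
  le_min (Int.emod_nonneg _ hN) (Int.emod_nonneg _ hN)

theorem vrm_dim3_iff_vrm_dim2_general
    (b N : ℤ) (k : ℤ) (hk : 1 ≤ k) (hk2 : 2 * k ≤ N) :
    ![(k : ℝ), (k : ℝ), (distN N (k * b) : ℝ)] ∈ vrm (absSet (Gamma 1 b N)) ↔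
      ![(k : ℝ), (distN N (k * b) : ℝ)] ∈ vrm (absSet (Gamma2 b N)) := by
  have hg : 0 ≤ ![(k : ℝ), (distN N (k * b) : ℝ)] := by
    intro i
    fin_cases i
    · exact (Int.cast_nonneg (by omega) : (0 : ℝ) ≤ k)
    · exact Int.cast_nonneg (distN_nonneg (by omega) _)
  exact dupFirst_mem_vrm_absSet_gamma_iff hg (by exact_mod_cast hk2 : (2 : ℝ) * k ≤ N)

/-- Let `b, N` be coprime positive integers with `1 ≤ b < N`. Then for every
integer `1 ≤ k ≤ N/2`, the point `(k, k, |kb|_N)` is a Voronoi relative minimum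
of `|Γ(1,b,N)|` iff `(k, |kb|_N)` is a Voronoi relative minimum of `|Γ₂(b,N)|`. -/
theorem vrm_dim3_iff_vrm_dim2
    (b N : ℤ) (hb : 1 ≤ b) (hbN : b < N) (hcop : Int.gcd b N = 1)
    (k : ℤ) (hk : 1 ≤ k) (hk2 : 2 * k ≤ N) :
    ![(k : ℝ), (k : ℝ), (distN N (k * b) : ℝ)] ∈ vrm (absSet (Gamma 1 b N)) ↔
      ![(k : ℝ), (distN N (k * b) : ℝ)] ∈ vrm (absSet (Gamma2 b N)) :=
  vrm_dim3_iff_vrm_dim2_general b N k hk hk2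
end
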